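/- Fix α ≥ 0 and L > 0. There exists a constant C = C(α, L) > 0 such that for all x₂ ≥ x₁ ≥ 0, y₂ ≥ y₁ ≥ 0 and t > 0 with x₂ y₂ ≤ L t², the 2×2 determinant q_t(x₁,y₁) q_t(x₂,y₂) − q_t(x₁,y₂) q_t(x₂,y₁) lies between C^{-1} t^{-2} q_t(x₁,y₂) q_t(x₂,y₁) (x₂−x₁)(y₂−y₁) and C t^{-2} q_t(x₁,y₂) q_t(x₂,y₁) (x₂−x₁)(y₂−y₁). -/

import Mathlib

/-!
Write `h_α(z) = 2^{-α} g(z²)` with `g(u) = ∑ cₙ uⁿ`, `cₙ = 4⁻ⁿ / (n! Γ(n + α + 1))`. Then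
`q_t(x, y) = φ(x) ψ(y) g(xy/t²)`, so the determinant of `q_t` is a nonnegative factor times
`g(X₁Y₁) g(X₂Y₂) - g(X₁Y₂) g(X₂Y₁)` with `X = x/t`, `Y = y/t`. Symmetrising the Cauchy product
under `(n, m) ↦ (m, n)`, twice this is `∑ cₙ cₘ (X₁ⁿX₂ᵐ - X₁ᵐX₂ⁿ)(Y₁ⁿY₂ᵐ - Y₁ᵐY₂ⁿ)`, whose terms
are products of two differences of the same sign. The `(0, 1)` term alone gives the lower bound
`c₀ c₁ (X₂ - X₁)(Y₂ - Y₁)`; `bᵏ - aᵏ ≤ k bᵏ⁻¹ (b - a)` bounds each term by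
`cₙ cₘ (n - m)² L^(n+m-1) (X₂ - X₁)(Y₂ - Y₁)`, and `(n - m)² ≤ 4^(n+m)` sums these to at most
`g(4L)²/L · (X₂ - X₁)(Y₂ - Y₁)`. Finally `c₀ ≤ g(X₁Y₂), g(X₂Y₁) ≤ g(L)`.
-/

/-- `h_α(z) = 2^{-α} ∑_{n≥0} (z/2)^{2n}/(n! Γ(n+α+1))`. -/
noncomputable def hA (α z : ℝ) : ℝ :=
  (2 : ℝ) ^ (-α) * ∑' n : ℕ, (z / 2) ^ (2 * n) / ((n.factorial : ℝ) * Real.Gamma ((n : ℝ) + α + 1))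

/-- The squared Bessel transition density of index `α`:
`q_t(x,y) = (1/2) t^{-α-1} y^α e^{-(x+y)/(2t)} h_α(√(xy)/t)`. -/
noncomputable def qK (α t x y : ℝ) : ℝ :=
  (1 / 2) * t ^ (-α - 1) * y ^ α * Real.exp (-(x + y) / (2 * t)) *
    hA α (Real.sqrt (x * y) / t)

open Real
open scoped Nat

lemma Real.Gamma_le_Gamma_natCast_add {x : ℝ} (hx : 1 ≤ x) (n : ℕ) :
    Gamma x ≤ Gamma (n + x) := by
  induction n with
  | zero => simp
  | succ n ih =>
    have hpos : 0 < (n : ℝ) + x := by positivity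
    rw [Nat.cast_succ, add_right_comm, Gamma_add_one hpos.ne']
    exact ih.trans (le_mul_of_one_le_left (Gamma_pos_of_pos hpos).le (by linarith))

noncomputable def besselCoeff (α : ℝ) (n : ℕ) : ℝ :=
  (1 / 4) ^ n / (n ! * Gamma (n + α + 1))

noncomputable def besselSeries (α u : ℝ) : ℝ :=
  ∑' n, besselCoeff α n * u ^ n

section BesselSeries

variable {α : ℝ}

lemma besselCoeff_pos (hα : 0 ≤ α) (n : ℕ) : 0 < besselCoeff α n := by
  have := Gamma_pos_of_pos (by positivity : (0 : ℝ) < n + α + 1)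
  unfold besselCoeff
  positivity

lemma besselCoeff_le (hα : 0 ≤ α) (n : ℕ) :
    besselCoeff α n ≤ (Gamma (α + 1))⁻¹ / n ! := by
  have hΓ := Gamma_pos_of_pos (by positivity : (0 : ℝ) < α + 1)
  have hΓn : Gamma (α + 1) ≤ Gamma (n + α + 1) := by
    rw [add_assoc]; exact Gamma_le_Gamma_natCast_add (by linarith) n
  calc besselCoeff α n ≤ 1 / (n ! * Gamma (n + α + 1)) := by
        unfold besselCoeff; gcongr; exact pow_le_one₀ (by norm_num) (by norm_num)
    _ ≤ 1 / (n ! * Gamma (α + 1)) := by gcongr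
    _ = (Gamma (α + 1))⁻¹ / n ! := by field_simp

lemma hasSum_besselSeries (hα : 0 ≤ α) {u : ℝ} (hu : 0 ≤ u) :
    HasSum (fun n ↦ besselCoeff α n * u ^ n) (besselSeries α u) := by
  refine (Summable.of_nonneg_of_le (fun n ↦ ?_) (fun n ↦ ?_)
    ((Real.summable_pow_div_factorial u).mul_left (Gamma (α + 1))⁻¹)).hasSum
  · have := besselCoeff_pos hα n; positivity
  · calc besselCoeff α n * u ^ n ≤ (Gamma (α + 1))⁻¹ / n ! * u ^ n := by
          gcongr; exact besselCoeff_le hα n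
      _ = _ := by ring

lemma besselCoeff_zero_le_besselSeries (hα : 0 ≤ α) {u : ℝ} (hu : 0 ≤ u) :
    besselCoeff α 0 ≤ besselSeries α u := by
  simpa using le_hasSum (hasSum_besselSeries hα hu) 0
    fun n _ ↦ by have := besselCoeff_pos hα n; positivity

lemma besselSeries_le_besselSeries (hα : 0 ≤ α) {u v : ℝ} (hu : 0 ≤ u) (huv : u ≤ v) :
    besselSeries α u ≤ besselSeries α v :=
  hasSum_le (fun n ↦ by have := besselCoeff_pos hα n; gcongr)
    (hasSum_besselSeries hα hu) (hasSum_besselSeries hα (hu.trans huv))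

end BesselSeries

lemma hA_eq_besselSeries (α z : ℝ) : hA α z = 2 ^ (-α) * besselSeries α (z ^ 2) := by
  unfold hA besselSeries besselCoeff
  congr 1
  refine tsum_congr fun n ↦ ?_
  rw [pow_mul, div_pow, div_pow, one_div_pow]
  norm_num
  ring

lemma qK_eq_besselSeries (α t : ℝ) {x y : ℝ} (hxy : 0 ≤ x * y) :
    qK α t x y = 2 ^ (-α) / 2 * t ^ (-α - 1) * exp (-x / (2 * t)) * (y ^ α * exp (-y / (2 * t)))
      * besselSeries α (x / t * (y / t)) := by
  rw [qK, hA_eq_besselSeries, div_pow, sq_sqrt hxy, div_mul_div_comm, ← sq,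
    show -(x + y) / (2 * t) = -x / (2 * t) + -y / (2 * t) by ring, exp_add]
  ring

def crossDiff (a b : ℝ) (n m : ℕ) : ℝ := a ^ n * b ^ m - a ^ m * b ^ n

section CrossDiff

variable {a b c d : ℝ}

lemma crossDiff_swap (a b : ℝ) (n m : ℕ) : crossDiff a b m n = -crossDiff a b n m := by
  unfold crossDiff; ring

lemma crossDiff_add_right (a b : ℝ) (n k : ℕ) :
    crossDiff a b n (n + k) = (a * b) ^ n * (b ^ k - a ^ k) := by
  unfold crossDiff; ring

lemma crossDiff_nonneg (ha : 0 ≤ a) (hab : a ≤ b) {n m : ℕ} (h : n ≤ m) :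
    0 ≤ crossDiff a b n m := by
  obtain ⟨k, rfl⟩ := Nat.exists_eq_add_of_le h
  rw [crossDiff_add_right]
  have := pow_le_pow_left₀ ha hab k
  have := ha.trans hab
  exact mul_nonneg (by positivity) (by linarith)

lemma crossDiff_add_succ_le (ha : 0 ≤ a) (hab : a ≤ b) (n k : ℕ) :
    crossDiff a b n (n + (k + 1)) ≤ (k + 1) * (a * b) ^ n * b ^ k * (b - a) := by
  have hb := ha.trans hab
  have hk := abs_pow_sub_pow_le b a (k + 1)
  rw [abs_of_nonneg (sub_nonneg.2 (pow_le_pow_left₀ ha hab _)), abs_of_nonneg (sub_nonneg.2 hab),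
    abs_of_nonneg hb, abs_of_nonneg ha, max_eq_left hab, Nat.add_sub_cancel] at hk
  rw [crossDiff_add_right]
  calc (a * b) ^ n * (b ^ (k + 1) - a ^ (k + 1)) ≤ (a * b) ^ n * ((b - a) * ↑(k + 1) * b ^ k) := by
        gcongr
    _ = _ := by push_cast; ring

lemma crossDiff_mul_crossDiff_nonneg (ha : 0 ≤ a) (hab : a ≤ b) (hc : 0 ≤ c) (hcd : c ≤ d)
    (n m : ℕ) : 0 ≤ crossDiff a b n m * crossDiff c d n m := by
  rcases le_total n m with h | h
  · exact mul_nonneg (crossDiff_nonneg ha hab h) (crossDiff_nonneg hc hcd h)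
  · rw [← neg_mul_neg, ← crossDiff_swap, ← crossDiff_swap]
    exact mul_nonneg (crossDiff_nonneg ha hab h) (crossDiff_nonneg hc hcd h)

lemma mul_crossDiff_mul_crossDiff_le {L : ℝ} (ha : 0 ≤ a) (hab : a ≤ b) (hc : 0 ≤ c)
    (hcd : c ≤ d) (hL : b * d ≤ L) (n m : ℕ) :
    L * (crossDiff a b n m * crossDiff c d n m)
      ≤ ((n : ℝ) - m) ^ 2 * L ^ (n + m) * ((b - a) * (d - c)) := by
  wlog h : n ≤ m generalizing n m
  · convert this m n (le_of_not_ge h) using 1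
    · rw [crossDiff_swap a, crossDiff_swap c, neg_mul_neg]
    · rw [add_comm n m]; ring
  obtain ⟨k, rfl⟩ := Nat.exists_eq_add_of_le h
  obtain _ | k := k
  · simp [crossDiff]
  have hb := ha.trans hab
  have hd := hc.trans hcd
  have hba : 0 ≤ b - a := by linarith
  have hdc : 0 ≤ d - c := by linarith
  have hL0 : 0 ≤ L := (mul_nonneg hb hd).trans hL
  have hac : a * c ≤ L := (mul_le_mul hab hcd hc hb).trans hL
  have hprod : crossDiff a b n (n + (k + 1)) * crossDiff c d n (n + (k + 1))
      ≤ ((k + 1) * (a * b) ^ n * b ^ k * (b - a)) * ((k + 1) * (c * d) ^ n * d ^ k * (d - c)) :=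
    mul_le_mul (crossDiff_add_succ_le ha hab n k) (crossDiff_add_succ_le hc hcd n k)
      (crossDiff_nonneg hc hcd (by omega)) (by positivity)
  calc L * (crossDiff a b n (n + (k + 1)) * crossDiff c d n (n + (k + 1)))
      ≤ (k + 1) ^ 2 * (L * (a * c) ^ n * (b * d) ^ n * (b * d) ^ k) * ((b - a) * (d - c)) := by
        refine (mul_le_mul_of_nonneg_left hprod hL0).trans_eq ?_
        ring
    _ ≤ (k + 1) ^ 2 * (L * L ^ n * L ^ n * L ^ k) * ((b - a) * (d - c)) := by
        have := mul_nonneg ha hc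
        gcongr
    _ = _ := by push_cast; ring

lemma sq_natCast_sub_le_four_pow (n m : ℕ) : ((n : ℝ) - m) ^ 2 ≤ 4 ^ (n + m) := by
  have h : ((n + m : ℕ) : ℝ) ≤ 2 ^ (n + m) := by exact_mod_cast Nat.lt_two_pow_self.le
  push_cast at h
  calc ((n : ℝ) - m) ^ 2 ≤ ((n : ℝ) + m) ^ 2 := by
        nlinarith [(Nat.cast_nonneg n : (0 : ℝ) ≤ n), (Nat.cast_nonneg m : (0 : ℝ) ≤ m)]
    _ ≤ (2 ^ (n + m)) ^ 2 := by gcongr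
    _ = 4 ^ (n + m) := by rw [← pow_mul, mul_comm, pow_mul]; norm_num

end CrossDiff

lemma HasSum.add_comp_swap {M β : Type*} [AddCommMonoid M] [TopologicalSpace M] [ContinuousAdd M]
    {f : β × β → M} {a : M} (h : HasSum f a) : HasSum (fun p ↦ f p + f p.swap) (a + a) :=
  h.add ((Equiv.prodComm β β).hasSum_iff.2 h)

lemma HasSum.mul_of_nonneg {ι κ : Type*} {f : ι → ℝ} {g : κ → ℝ} {s t : ℝ} (hf : HasSum f s)
    (hg : HasSum g t) (hf₀ : 0 ≤ f) (hg₀ : 0 ≤ g) :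
    HasSum (fun p : ι × κ ↦ f p.1 * g p.2) (s * t) :=
  hf.mul hg (hf.summable.mul_of_nonneg hg.summable hf₀ hg₀)

noncomputable def besselSeriesDet (α X₁ X₂ Y₁ Y₂ : ℝ) : ℝ :=
  besselSeries α (X₁ * Y₁) * besselSeries α (X₂ * Y₂)
    - besselSeries α (X₁ * Y₂) * besselSeries α (X₂ * Y₁)

noncomputable def besselDetTerm (α X₁ X₂ Y₁ Y₂ : ℝ) (p : ℕ × ℕ) : ℝ :=
  besselCoeff α p.1 * besselCoeff α p.2 * (crossDiff X₁ X₂ p.1 p.2 * crossDiff Y₁ Y₂ p.1 p.2)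

section BesselSeriesDet

variable {α L X₁ X₂ Y₁ Y₂ : ℝ}

lemma besselCoeff_mul_pow_nonneg (hα : 0 ≤ α) {u : ℝ} (hu : 0 ≤ u) :
    0 ≤ fun n ↦ besselCoeff α n * u ^ n :=
  fun n ↦ mul_nonneg (besselCoeff_pos hα n).le (pow_nonneg hu n)

lemma hasSum_besselDetTerm (hα : 0 ≤ α) (hX₁ : 0 ≤ X₁) (hX₂ : 0 ≤ X₂) (hY₁ : 0 ≤ Y₁)
    (hY₂ : 0 ≤ Y₂) :
    HasSum (besselDetTerm α X₁ X₂ Y₁ Y₂) (2 * besselSeriesDet α X₁ X₂ Y₁ Y₂) := by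
  have hmul {u v : ℝ} (hu : 0 ≤ u) (hv : 0 ≤ v) :=
    (hasSum_besselSeries hα hu).mul_of_nonneg (hasSum_besselSeries hα hv)
      (besselCoeff_mul_pow_nonneg hα hu) (besselCoeff_mul_pow_nonneg hα hv)
  have h := ((hmul (mul_nonneg hX₁ hY₁) (mul_nonneg hX₂ hY₂)).sub
    (hmul (mul_nonneg hX₁ hY₂) (mul_nonneg hX₂ hY₁))).add_comp_swap
  rw [← two_mul] at h
  refine h.congr_fun fun ⟨n, m⟩ ↦ ?_
  simp only [besselDetTerm, crossDiff, Prod.swap]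
  ring

lemma besselDetTerm_nonneg (hα : 0 ≤ α) (hX₁ : 0 ≤ X₁) (hX : X₁ ≤ X₂) (hY₁ : 0 ≤ Y₁)
    (hY : Y₁ ≤ Y₂) (p : ℕ × ℕ) : 0 ≤ besselDetTerm α X₁ X₂ Y₁ Y₂ p :=
  mul_nonneg (mul_nonneg (besselCoeff_pos hα _).le (besselCoeff_pos hα _).le)
    (crossDiff_mul_crossDiff_nonneg hX₁ hX hY₁ hY _ _)

lemma mul_besselDetTerm_le (hα : 0 ≤ α) (hX₁ : 0 ≤ X₁) (hX : X₁ ≤ X₂) (hY₁ : 0 ≤ Y₁)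
    (hY : Y₁ ≤ Y₂) (hL : X₂ * Y₂ ≤ L) (p : ℕ × ℕ) :
    L * besselDetTerm α X₁ X₂ Y₁ Y₂ p
      ≤ besselCoeff α p.1 * (4 * L) ^ p.1 * (besselCoeff α p.2 * (4 * L) ^ p.2)
        * ((X₂ - X₁) * (Y₂ - Y₁)) := by
  obtain ⟨n, m⟩ := p
  have hc := mul_nonneg (besselCoeff_pos hα n).le (besselCoeff_pos hα m).le
  have hΔ : 0 ≤ (X₂ - X₁) * (Y₂ - Y₁) := mul_nonneg (by linarith) (by linarith)
  have hL₀ : 0 ≤ L := (mul_nonneg (hX₁.trans hX) (hY₁.trans hY)).trans hL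
  calc L * besselDetTerm α X₁ X₂ Y₁ Y₂ (n, m)
      = besselCoeff α n * besselCoeff α m
          * (L * (crossDiff X₁ X₂ n m * crossDiff Y₁ Y₂ n m)) := by
        rw [besselDetTerm]; ring
    _ ≤ besselCoeff α n * besselCoeff α m
          * (((n : ℝ) - m) ^ 2 * L ^ (n + m) * ((X₂ - X₁) * (Y₂ - Y₁))) := by
        exact mul_le_mul_of_nonneg_left (mul_crossDiff_mul_crossDiff_le hX₁ hX hY₁ hY hL n m) hc
    _ ≤ besselCoeff α n * besselCoeff α m
          * (4 ^ (n + m) * L ^ (n + m) * ((X₂ - X₁) * (Y₂ - Y₁))) := by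
        gcongr; exact sq_natCast_sub_le_four_pow n m
    _ = _ := by ring

theorem besselSeriesDet_bounds (hα : 0 ≤ α) (hX₁ : 0 ≤ X₁) (hX : X₁ ≤ X₂) (hY₁ : 0 ≤ Y₁)
    (hY : Y₁ ≤ Y₂) (hL : X₂ * Y₂ ≤ L) :
    besselCoeff α 0 * besselCoeff α 1 * ((X₂ - X₁) * (Y₂ - Y₁))
        ≤ 2 * besselSeriesDet α X₁ X₂ Y₁ Y₂ ∧
      L * (2 * besselSeriesDet α X₁ X₂ Y₁ Y₂)
        ≤ besselSeries α (4 * L) ^ 2 * ((X₂ - X₁) * (Y₂ - Y₁)) := by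
  have hsum := hasSum_besselDetTerm hα hX₁ (hX₁.trans hX) hY₁ (hY₁.trans hY)
  have hL₀ : 0 ≤ 4 * L := by
    have := (mul_nonneg (hX₁.trans hX) (hY₁.trans hY)).trans hL; linarith
  constructor
  · simpa [besselDetTerm, crossDiff] using
      le_hasSum hsum (0, 1) fun p _ ↦ besselDetTerm_nonneg hα hX₁ hX hY₁ hY p
  · rw [sq]
    exact hasSum_le (mul_besselDetTerm_le hα hX₁ hX hY₁ hY hL) (hsum.mul_left L)
      (((hasSum_besselSeries hα hL₀).mul_of_nonneg (hasSum_besselSeries hα hL₀)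
        (besselCoeff_mul_pow_nonneg hα hL₀) (besselCoeff_mul_pow_nonneg hα hL₀)).mul_right _)

end BesselSeriesDet

theorem besselSeriesDet_comparable {α L : ℝ} (hα : 0 ≤ α) (hL : 0 < L) :
    ∃ C > 0, ∀ X₁ X₂ Y₁ Y₂ : ℝ, 0 ≤ X₁ → X₁ ≤ X₂ → 0 ≤ Y₁ → Y₁ ≤ Y₂ → X₂ * Y₂ ≤ L →
      C⁻¹ * (besselSeries α (X₁ * Y₂) * besselSeries α (X₂ * Y₁) * ((X₂ - X₁) * (Y₂ - Y₁)))
          ≤ besselSeriesDet α X₁ X₂ Y₁ Y₂ ∧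
        besselSeriesDet α X₁ X₂ Y₁ Y₂
          ≤ C * (besselSeries α (X₁ * Y₂) * besselSeries α (X₂ * Y₁)
            * ((X₂ - X₁) * (Y₂ - Y₁))) := by
  have hc₀ := besselCoeff_pos hα 0
  have hc₁ := besselCoeff_pos hα 1
  have hG := hc₀.trans_le (besselCoeff_zero_le_besselSeries hα hL.le)
  set C₁ := 2 * besselSeries α L ^ 2 / (besselCoeff α 0 * besselCoeff α 1) with hC₁
  set C₂ := besselSeries α (4 * L) ^ 2 / (2 * L * besselCoeff α 0 ^ 2) with hC₂
  refine ⟨max C₁ C₂, lt_max_of_lt_left (by positivity),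
    fun X₁ X₂ Y₁ Y₂ hX₁ hX hY₁ hY hXY ↦ ?_⟩
  obtain ⟨hlow, hup⟩ := besselSeriesDet_bounds hα hX₁ hX hY₁ hY hXY
  have hX₂ := hX₁.trans hX
  have hY₂ := hY₁.trans hY
  have hb₀ := besselCoeff_zero_le_besselSeries hα (mul_nonneg hX₁ hY₂)
  have hc₀' := besselCoeff_zero_le_besselSeries hα (mul_nonneg hX₂ hY₁)
  have hbL := besselSeries_le_besselSeries hα (mul_nonneg hX₁ hY₂)
    ((mul_le_mul_of_nonneg_right hX hY₂).trans hXY)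
  have hcL := besselSeries_le_besselSeries hα (mul_nonneg hX₂ hY₁)
    ((mul_le_mul_of_nonneg_left hY hX₂).trans hXY)
  have hP : besselCoeff α 0 ^ 2 ≤ besselSeries α (X₁ * Y₂) * besselSeries α (X₂ * Y₁) ∧
      besselSeries α (X₁ * Y₂) * besselSeries α (X₂ * Y₁) ≤ besselSeries α L ^ 2 := by
    rw [sq, sq]
    exact ⟨mul_le_mul hb₀ hc₀' hc₀.le (hc₀.le.trans hb₀),
      mul_le_mul hbL hcL (hc₀.le.trans hc₀') hG.le⟩
  have hΔ : 0 ≤ (X₂ - X₁) * (Y₂ - Y₁) := mul_nonneg (by linarith) (by linarith)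
  generalize besselSeries α (X₁ * Y₂) * besselSeries α (X₂ * Y₁) = P at hP ⊢
  generalize (X₂ - X₁) * (Y₂ - Y₁) = Δ at hΔ hlow hup ⊢
  constructor
  · calc (max C₁ C₂)⁻¹ * (P * Δ) ≤ C₁⁻¹ * (besselSeries α L ^ 2 * Δ) := by
          gcongr
          · exact mul_nonneg ((sq_nonneg _).trans hP.1) hΔ
          · exact le_max_left _ _
          · exact hP.2
      _ = besselCoeff α 0 * besselCoeff α 1 * Δ / 2 := by rw [hC₁]; field_simp
      _ ≤ besselSeriesDet α X₁ X₂ Y₁ Y₂ := by linarith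
  · calc besselSeriesDet α X₁ X₂ Y₁ Y₂ ≤ besselSeries α (4 * L) ^ 2 * Δ / (2 * L) := by
          rw [le_div_iff₀ (by positivity)]; linarith
      _ = C₂ * (besselCoeff α 0 ^ 2 * Δ) := by rw [hC₂]; field_simp
      _ ≤ max C₁ C₂ * (P * Δ) := by
          gcongr
          · exact le_max_right _ _
          · exact hP.1

lemma exists_qK_det_eq_mul_besselSeriesDet (α t : ℝ) {x₁ x₂ y₁ y₂ : ℝ} (hx₁ : 0 ≤ x₁)
    (hx₂ : 0 ≤ x₂) (hy₁ : 0 ≤ y₁) (hy₂ : 0 ≤ y₂) :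
    ∃ Q, 0 ≤ Q ∧
      qK α t x₁ y₁ * qK α t x₂ y₂ - qK α t x₁ y₂ * qK α t x₂ y₁
        = Q * besselSeriesDet α (x₁ / t) (x₂ / t) (y₁ / t) (y₂ / t) ∧
      qK α t x₁ y₂ * qK α t x₂ y₁
        = Q * (besselSeries α (x₁ / t * (y₂ / t)) * besselSeries α (x₂ / t * (y₁ / t))) := by
  refine ⟨(2 ^ (-α) / 2 * t ^ (-α - 1)) ^ 2 * (exp (-x₁ / (2 * t)) * exp (-x₂ / (2 * t)))
    * (y₁ ^ α * exp (-y₁ / (2 * t)) * (y₂ ^ α * exp (-y₂ / (2 * t)))), by positivity, ?_, ?_⟩ <;>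
  · simp only [besselSeriesDet, qK_eq_besselSeries α t (mul_nonneg hx₁ hy₁),
      qK_eq_besselSeries α t (mul_nonneg hx₁ hy₂), qK_eq_besselSeries α t (mul_nonneg hx₂ hy₁),
      qK_eq_besselSeries α t (mul_nonneg hx₂ hy₂)]
    ring

/-- For `α ≥ 0` and `L > 0` there is `C = C(α,L) > 0` such that for all
`x₂ ≥ x₁ ≥ 0`, `y₂ ≥ y₁ ≥ 0` and `t > 0` with `x₂ y₂ ≤ L t²`, the `2×2`
determinant `q_t(x₁,y₁)q_t(x₂,y₂) − q_t(x₁,y₂)q_t(x₂,y₁)` is comparable to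
`t⁻² q_t(x₁,y₂) q_t(x₂,y₁)(x₂−x₁)(y₂−y₁)` within factor `C`. -/
theorem stmt6 (α L : ℝ) (hα : 0 ≤ α) (hL : 0 < L) :
    ∃ C > 0, ∀ x₁ x₂ y₁ y₂ t : ℝ,
      0 ≤ x₁ → x₁ ≤ x₂ → 0 ≤ y₁ → y₁ ≤ y₂ → 0 < t → x₂ * y₂ ≤ L * t ^ 2 →
      (C⁻¹ * (qK α t x₁ y₂ * qK α t x₂ y₁ * (x₂ - x₁) * (y₂ - y₁)) / t ^ 2
          ≤ qK α t x₁ y₁ * qK α t x₂ y₂ - qK α t x₁ y₂ * qK α t x₂ y₁)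
        ∧ qK α t x₁ y₁ * qK α t x₂ y₂ - qK α t x₁ y₂ * qK α t x₂ y₁
          ≤ C * (qK α t x₁ y₂ * qK α t x₂ y₁ * (x₂ - x₁) * (y₂ - y₁)) / t ^ 2 := by
  obtain ⟨C, hC, hcomp⟩ := besselSeriesDet_comparable hα hL
  refine ⟨C, hC, fun x₁ x₂ y₁ y₂ t hx₁ hx hy₁ hy ht hxy ↦ ?_⟩
  obtain ⟨hlow, hup⟩ := hcomp (x₁ / t) (x₂ / t) (y₁ / t) (y₂ / t) (by positivity)
    (div_le_div_of_nonneg_right hx ht.le) (by positivity) (div_le_div_of_nonneg_right hy ht.le)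
    (by rw [div_mul_div_comm, div_le_iff₀ (by positivity)]; linarith)
  obtain ⟨Q, hQ, hdet, hoff⟩ :=
    exists_qK_det_eq_mul_besselSeriesDet α t hx₁ (hx₁.trans hx) hy₁ (hy₁.trans hy)
  have hΔ : (x₂ - x₁) * (y₂ - y₁) / t ^ 2 = (x₂ / t - x₁ / t) * (y₂ / t - y₁ / t) := by
    field_simp
  rw [hdet, hoff]
  constructor
  · calc _ = Q * (C⁻¹ * (besselSeries α (x₁ / t * (y₂ / t)) * besselSeries α (x₂ / t * (y₁ / t))
          * ((x₂ / t - x₁ / t) * (y₂ / t - y₁ / t)))) := by rw [← hΔ]; ring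
      _ ≤ _ := mul_le_mul_of_nonneg_left hlow hQ
  · calc _ ≤ Q * (C * (besselSeries α (x₁ / t * (y₂ / t)) * besselSeries α (x₂ / t * (y₁ / t))
          * ((x₂ / t - x₁ / t) * (y₂ / t - y₁ / t)))) := mul_le_mul_of_nonneg_left hup hQ
      _ = _ := by rw [← hΔ]; ring
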